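/- arXiv:0812.2306 — 2 statements merged into one kernel-verified Lean document; each statement's English description precedes it below -/
import Mathlib

section
/- For every m ∈ ℕ^l the fermionic power series satisfies J_m(q,z) = ∑_{0 ≤ a ≤ m} z^a q^{W(a)} (∏_{i=1}^l (q_i; q_i)_{m_i − a_i})^{−1} J_a(q,z), where 0 ≤ a ≤ m means 0 ≤ a_i ≤ m_i for all i, and (J_m)_{m∈ℕ^l} is the unique family of formal power series in ℚ(q)[[z_1,…,z_l]] with J_0 = 1 satisfying this recursion. -/
/- STATEMENT 1: For a symmetrized Cartan matrix B (B_{ii} = 2d_i), the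
   fermionic power series J_m(q,z) ∈ ℚ(q)[[z_1,…,z_l]] satisfy
     J_m = ∑_{0≤a≤m} z^a q^{W(a)} (∏_i (q_i;q_i)_{m_i−a_i})⁻¹ J_a,
   and (J_m) is the unique family with J_0 = 1 satisfying this recursion. -/

noncomputable section

open scoped BigOperators

/-- The field ℚ(q). -/
abbrev Kq : Type := RatFunc ℚ

/-- the variable q -/
def q1 : Kq := RatFunc.X

/-- `(q_i;q_i)_n = ∏_{k=1}^n (1 − q^{d_i k})` -/
def qpd (di : ℕ) (n : ℕ) : Kq := ∏ k ∈ Finset.range n, (1 - (q1 ^ di) ^ (k + 1))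

/-- The number `∑_t n_i^{(t)}` of particles of colour `i` in a configuration. -/
def rowSum {l : ℕ} (c : (Fin l × ℕ) →₀ ℕ) (i : Fin l) : ℕ :=
  ∑ p ∈ c.support, if p.1 = i then c p else 0

/-- The total weight `∑_t t·n_i^{(t)}` of the particles of colour `i`. -/
def degSum {l : ℕ} (c : (Fin l × ℕ) →₀ ℕ) (i : Fin l) : ℕ :=
  ∑ p ∈ c.support, if p.1 = i then p.2 * c p else 0

/-- `E = (1/2)∑ min(t,t') B_{ij} n_i^{(t)} n_j^{(t')} − ∑_t t ∑_i d_i n_i^{(t)}`;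
the double sum is even (as B_{ii} = 2d_i), so integer division by 2 is exact. -/
def Eb {l : ℕ} (B : Matrix (Fin l) (Fin l) ℤ) (d : Fin l → ℕ)
    (c : (Fin l × ℕ) →₀ ℕ) : ℤ :=
  (∑ p ∈ c.support, ∑ p' ∈ c.support,
      B p.1 p'.1 * (min p.2 p'.2 : ℤ) * c p * c p') / 2
    - ∑ p ∈ c.support, (d p.1 : ℤ) * (p.2 : ℤ) * c p

/-- `W(a) = (1/2)∑ B_{ij} a_i a_j − ∑ d_i a_i`; the double sum is even, so
integer division by 2 is exact. -/
def Wb {l : ℕ} (B : Matrix (Fin l) (Fin l) ℤ) (d : Fin l → ℕ) (a : Fin l → ℕ) : ℤ :=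
  (∑ i, ∑ j, B i j * a i * a j) / 2 - ∑ i, (d i : ℤ) * a i

/-- The fermionic power series `J_m(q,z) ∈ ℚ(q)[[z_1,…,z_l]]`: the coefficient
of the monomial `z^k` is the (finite) sum over all configurations
`c = (n_i^{(t)})` with row sums `m` and colour-degrees `k` of
`q^E / ∏_{t,i} (q_i;q_i)_{n_i^{(t)}}`. -/
def Jser {l : ℕ} (B : Matrix (Fin l) (Fin l) ℤ) (d : Fin l → ℕ) (m : Fin l → ℕ) :
    MvPowerSeries (Fin l) Kq :=
  fun k => ∑ᶠ (c : (Fin l × ℕ) →₀ ℕ)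
    (_ : (∀ i, rowSum c i = m i) ∧ (∀ i, degSum c i = k i)),
      q1 ^ Eb B d c * (∏ p ∈ c.support, qpd (d p.1) (c p))⁻¹

/-!
Splitting off level `0` of a configuration and shifting the other levels down by one is a
bijection between the configurations with row sums `m` and the pairs (level-0 part `m - a`,
configuration with row sums `a`), for `a ≤ m`. The shift lowers the `z`-degree by `a` and, as
`min (t + 1) (t' + 1) = min t t' + 1`, lowers `E` by `W(a)`, while the level-0 particles contribute
`∏ᵢ 1 / (q_i; q_i)_{m_i - a_i}`: this is the recursion. Its term `a = m` is `z^m` times `J_m`, and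
`1 - z^m (…)` is invertible for `m ≠ 0`, so the recursion determines `J_m` from the `J_a` with
`a < m`.
-/

namespace MvPowerSeries

variable {σ R : Type*} [Ring R]

lemma eq_zero_of_eq_monomial_mul {n : σ →₀ ℕ} (hn : n ≠ 0) (r : R) {f : MvPowerSeries σ R}
    (h : f = monomial n r * f) : f = 0 := by
  classical
  have hunit : IsUnit (1 - monomial n r) := by
    rw [isUnit_iff_constantCoeff, map_sub, map_one, ← coeff_zero_eq_constantCoeff_apply,
      coeff_monomial, if_neg hn.symm, sub_zero]
    exact isUnit_one
  rw [← hunit.mul_right_eq_zero, sub_mul, one_mul, ← h, sub_self]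

lemma eq_of_eq_sum_monomial_mul [Fintype σ] [DecidableEq σ]
    {coef : (σ → ℕ) → (σ → ℕ) → R} {F G : (σ → ℕ) → MvPowerSeries σ R}
    (h0 : F 0 = G 0)
    (hF : ∀ m, F m =
      ∑ a ∈ Finset.Iic m, monomial (Finsupp.equivFunOnFinite.symm a) (coef m a) * F a)
    (hG : ∀ m, G m =
      ∑ a ∈ Finset.Iic m, monomial (Finsupp.equivFunOnFinite.symm a) (coef m a) * G a) :
    F = G := by
  funext m
  induction m using WellFoundedLT.induction with
  | _ m ih =>
    obtain rfl | hm := eq_or_ne m 0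
    · exact h0
    rw [← sub_eq_zero]
    refine eq_zero_of_eq_monomial_mul (n := Finsupp.equivFunOnFinite.symm m)
      (by simpa [Finsupp.ext_iff, funext_iff] using hm) (coef m m) ?_
    conv_lhs => rw [hF m, hG m, ← Finset.sum_sub_distrib]
    rw [Finset.sum_eq_single_of_mem m (Finset.mem_Iic.mpr le_rfl) fun a ha hne => ?_, mul_sub]
    rw [ih a (lt_of_le_of_ne (Finset.mem_Iic.mp ha) hne), sub_self]

end MvPowerSeries

namespace Fermionic

variable {l : ℕ}

abbrev Config (l : ℕ) := (Fin l × ℕ) →₀ ℕ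

def levelSucc : Fin l × ℕ ↪ Fin l × ℕ :=
  ⟨fun p => (p.1, p.2 + 1), fun p q h => by simpa [Prod.ext_iff] using h⟩

def shift (c : Config l) : Config l :=
  c.comapDomain levelSucc levelSucc.injective.injOn

def unshift (b : Fin l → ℕ) (c : Config l) : Config l :=
  c.embDomain levelSucc + ∑ i, Finsupp.single (i, 0) (b i)

@[simp] lemma shift_apply (c : Config l) (i : Fin l) (t : ℕ) : shift c (i, t) = c (i, t + 1) :=
  rfl

@[simp] lemma unshift_apply_zero (b : Fin l → ℕ) (c : Config l) (i : Fin l) :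
    unshift b c (i, 0) = b i := by
  have hlow : c.embDomain levelSucc (i, 0) = 0 :=
    Finsupp.embDomain_of_notMem_range _ _ _ <| by
      rintro ⟨p, hp⟩
      simp [levelSucc, Prod.ext_iff] at hp
  simp [unshift, hlow, Finsupp.single_apply, Prod.ext_iff]

@[simp] lemma unshift_apply_succ (b : Fin l → ℕ) (c : Config l) (i : Fin l) (t : ℕ) :
    unshift b c (i, t + 1) = c (i, t) := by
  have hup : c.embDomain levelSucc (i, t + 1) = c (i, t) :=
    Finsupp.embDomain_apply_self levelSucc c (i, t)
  simp [unshift, hup, Prod.ext_iff]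

@[simp] lemma shift_unshift (b : Fin l → ℕ) (c : Config l) : shift (unshift b c) = c := by
  ext ⟨i, t⟩
  simp

lemma unshift_shift (c : Config l) : unshift (fun i => c (i, 0)) (shift c) = c := by
  ext ⟨i, t⟩
  cases t <;> simp

lemma exists_levels_lt (c : Config l) :
    ∃ N, (∀ p ∈ c.support, p.2 < N + 1) ∧ ∀ p ∈ (shift c).support, p.2 < N := by
  refine ⟨c.support.sup Prod.snd, fun p hp => Nat.lt_succ_of_le (Finset.le_sup hp),
    fun p hp => ?_⟩
  have hsucc : (p.1, p.2 + 1) ∈ c.support :=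
    Finsupp.mem_support_iff.mpr (Finsupp.mem_support_iff.mp hp :)
  exact Nat.lt_of_succ_le (Finset.le_sup (f := Prod.snd) hsucc)

section Levels

variable {c : Config l} {N : ℕ}

@[to_additive]
lemma prod_support_eq_prod_levels {M : Type*} [CommMonoid M] (hN : ∀ p ∈ c.support, p.2 < N)
    {f : Fin l × ℕ → M} (hf : ∀ p, c p = 0 → f p = 1) :
    ∏ p ∈ c.support, f p = ∏ i, ∏ t ∈ Finset.range N, f (i, t) := by
  rw [← Finset.prod_product]
  refine Finset.prod_subset (fun p hp => by simpa using hN p hp) fun p _ hp => hf p ?_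
  simpa using hp

lemma rowSum_eq_sum_range (hN : ∀ p ∈ c.support, p.2 < N) (i : Fin l) :
    rowSum c i = ∑ t ∈ Finset.range N, c (i, t) := by
  rw [rowSum, sum_support_eq_sum_levels hN (by simp +contextual), Finset.sum_comm]
  simp

lemma degSum_eq_sum_range (hN : ∀ p ∈ c.support, p.2 < N) (i : Fin l) :
    degSum c i = ∑ t ∈ Finset.range N, t * c (i, t) := by
  rw [degSum, sum_support_eq_sum_levels hN (by simp +contextual), Finset.sum_comm]
  simp

end Levels

lemma rowSum_eq_add_rowSum_shift (c : Config l) (i : Fin l) :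
    rowSum c i = c (i, 0) + rowSum (shift c) i := by
  obtain ⟨N, hc, hs⟩ := exists_levels_lt c
  rw [rowSum_eq_sum_range hc, rowSum_eq_sum_range hs, Finset.sum_range_succ', add_comm]
  rfl

lemma degSum_eq_add_rowSum_shift (c : Config l) (i : Fin l) :
    degSum c i = degSum (shift c) i + rowSum (shift c) i := by
  obtain ⟨N, hc, hs⟩ := exists_levels_lt c
  rw [degSum_eq_sum_range hc, degSum_eq_sum_range hs, rowSum_eq_sum_range hs,
    Finset.sum_range_succ']
  simp [add_mul, Finset.sum_add_distrib]

lemma prod_qpd_eq_mul_prod_qpd_shift (d : Fin l → ℕ) (c : Config l) :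
    ∏ p ∈ c.support, qpd (d p.1) (c p) =
      (∏ i, qpd (d i) (c (i, 0))) * ∏ p ∈ (shift c).support, qpd (d p.1) (shift c p) := by
  obtain ⟨N, hc, hs⟩ := exists_levels_lt c
  rw [prod_support_eq_prod_levels hc (by simp +contextual [qpd]),
    prod_support_eq_prod_levels hs (by simp +contextual [qpd]), ← Finset.prod_mul_distrib]
  refine Finset.prod_congr rfl fun i _ => ?_
  rw [Finset.prod_range_succ', mul_comm]
  rfl

lemma even_sum_sum_of_symm {ι : Type*} [DecidableEq ι] (M : ι → ι → ℤ)
    (hsym : ∀ p q, M p q = M q p) (hdiag : ∀ p, Even (M p p)) (s : Finset ι) :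
    Even (∑ p ∈ s, ∑ q ∈ s, M p q) := by
  induction s using Finset.induction_on with
  | empty => simp
  | insert a s ha ih =>
    have hrow : ∑ p ∈ s, ∑ q ∈ insert a s, M p q =
        ∑ q ∈ s, M a q + ∑ p ∈ s, ∑ q ∈ s, M p q := by
      simp only [Finset.sum_insert ha, Finset.sum_add_distrib, hsym _ a]
    rw [Finset.sum_insert ha, Finset.sum_insert ha, hrow]
    obtain ⟨x, hx⟩ := hdiag a
    obtain ⟨y, hy⟩ := ih
    exact ⟨x + ∑ q ∈ s, M a q + y, by rw [hx, hy]; ring⟩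

def minQuadForm (B : Matrix (Fin l) (Fin l) ℤ) (c : Config l) : ℤ :=
  ∑ p ∈ c.support, ∑ p' ∈ c.support, B p.1 p'.1 * (min p.2 p'.2 : ℤ) * c p * c p'

lemma minQuadForm_eq_sum_range (B : Matrix (Fin l) (Fin l) ℤ) {c : Config l} {N : ℕ}
    (hN : ∀ p ∈ c.support, p.2 < N) :
    minQuadForm B c = ∑ i, ∑ j, B i j * ∑ t ∈ Finset.range N,
      ∑ s ∈ Finset.range N, ((min t s : ℕ) : ℤ) * c (i, t) * c (j, s) := by
  have hinner (p : Fin l × ℕ) :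
      ∑ p' ∈ c.support, B p.1 p'.1 * (min p.2 p'.2 : ℤ) * c p * c p' =
        ∑ j, ∑ s ∈ Finset.range N, B p.1 j * (min p.2 s : ℤ) * c p * c (j, s) :=
    sum_support_eq_sum_levels hN (by simp +contextual)
  simp_rw [minQuadForm, hinner]
  rw [sum_support_eq_sum_levels hN (by simp +contextual)]
  simp_rw [Finset.mul_sum]
  refine Finset.sum_congr rfl fun i _ => ?_
  rw [Finset.sum_comm]
  refine Finset.sum_congr rfl fun j _ => ?_
  simp only [Nat.cast_min, mul_assoc]

lemma sum_range_succ_min_mul {R : Type*} [CommSemiring R] (x y : ℕ → R) (N : ℕ) :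
    ∑ t ∈ Finset.range (N + 1), ∑ s ∈ Finset.range (N + 1),
        ((min t s : ℕ) : R) * x t * y s =
      ∑ t ∈ Finset.range N, ∑ s ∈ Finset.range N,
          ((min t s : ℕ) : R) * x (t + 1) * y (s + 1) +
        (∑ t ∈ Finset.range N, x (t + 1)) * ∑ s ∈ Finset.range N, y (s + 1) := by
  simp only [Finset.sum_range_succ', Nat.add_min_add_right, Nat.zero_min, Nat.min_zero,
    Nat.cast_add, Nat.cast_one, Nat.cast_zero, zero_mul, add_zero, Finset.sum_const_zero, add_mul,
    one_mul, Finset.sum_add_distrib, Finset.sum_mul, Finset.mul_sum, mul_assoc]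
  exact congrArg _ Finset.sum_comm

lemma minQuadForm_eq_add_shift (B : Matrix (Fin l) (Fin l) ℤ) (c : Config l) :
    minQuadForm B c = minQuadForm B (shift c) +
      ∑ i, ∑ j, B i j * rowSum (shift c) i * rowSum (shift c) j := by
  obtain ⟨N, hc, hs⟩ := exists_levels_lt c
  rw [minQuadForm_eq_sum_range B hc, minQuadForm_eq_sum_range B hs, ← Finset.sum_add_distrib]
  refine Finset.sum_congr rfl fun i _ => ?_
  rw [← Finset.sum_add_distrib]
  refine Finset.sum_congr rfl fun j _ => ?_
  rw [sum_range_succ_min_mul, rowSum_eq_sum_range hs, rowSum_eq_sum_range hs]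
  simp only [shift_apply]
  push_cast
  ring

lemma Eb_eq (B : Matrix (Fin l) (Fin l) ℤ) (d : Fin l → ℕ) (c : Config l) :
    Eb B d c = minQuadForm B c / 2 - ∑ i, (d i : ℤ) * degSum c i := by
  obtain ⟨N, hc, -⟩ := exists_levels_lt c
  rw [Eb, minQuadForm]
  congr 1
  rw [sum_support_eq_sum_levels hc (f := fun p => (d p.1 : ℤ) * p.2 * c p) (by simp +contextual)]
  refine Finset.sum_congr rfl fun i _ => ?_
  rw [degSum_eq_sum_range hc, Nat.cast_sum, Finset.mul_sum]
  refine Finset.sum_congr rfl fun t _ => ?_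
  push_cast
  ring

lemma Eb_eq_add_Eb_shift {B : Matrix (Fin l) (Fin l) ℤ} {d : Fin l → ℕ} (hsym : B.IsSymm)
    (hdiag : ∀ i, B i i = 2 * d i) (c : Config l) :
    Eb B d c = Wb B d (rowSum (shift c)) + Eb B d (shift c) := by
  -- `Eb` halves by integer division, which splits over the sum as the new term is even
  have heven : Even (∑ i, ∑ j, B i j * (rowSum (shift c) i : ℤ) * rowSum (shift c) j) :=
    even_sum_sum_of_symm _ (fun i j => by rw [hsym.apply]; ring)
      (fun i => ⟨d i * rowSum (shift c) i * rowSum (shift c) i, by rw [hdiag]; ring⟩) _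
  rw [Eb_eq, Eb_eq, Wb, minQuadForm_eq_add_shift, Int.add_ediv_of_dvd_right heven.two_dvd]
  simp only [degSum_eq_add_rowSum_shift c, Nat.cast_add, mul_add, Finset.sum_add_distrib]
  ring

def weight (B : Matrix (Fin l) (Fin l) ℤ) (d : Fin l → ℕ) (c : Config l) : Kq :=
  q1 ^ Eb B d c * (∏ p ∈ c.support, qpd (d p.1) (c p))⁻¹

lemma weight_eq_mul_weight_shift {B : Matrix (Fin l) (Fin l) ℤ} {d : Fin l → ℕ}
    (hsym : B.IsSymm) (hdiag : ∀ i, B i i = 2 * d i) (c : Config l) :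
    weight B d c = q1 ^ Wb B d (rowSum (shift c)) *
      (∏ i, qpd (d i) (c (i, 0)))⁻¹ * weight B d (shift c) := by
  rw [weight, weight, Eb_eq_add_Eb_shift hsym hdiag, zpow_add₀ RatFunc.X_ne_zero,
    prod_qpd_eq_mul_prod_qpd_shift, mul_inv]
  ring

lemma le_rowSum (c : Config l) (i : Fin l) (t : ℕ) : c (i, t) ≤ rowSum c i := by
  by_cases h : (i, t) ∈ c.support
  · simpa [rowSum] using Finset.single_le_sum (f := fun p => if p.1 = i then c p else 0)
      (fun _ _ => Nat.zero_le _) h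
  · simp [Finsupp.notMem_support_iff.mp h]

lemma mul_le_degSum (c : Config l) (i : Fin l) (t : ℕ) : t * c (i, t) ≤ degSum c i := by
  by_cases h : (i, t) ∈ c.support
  · simpa [degSum] using Finset.single_le_sum (f := fun p => if p.1 = i then p.2 * c p else 0)
      (fun _ _ => Nat.zero_le _) h
  · simp [Finsupp.notMem_support_iff.mp h]

def configSet (m : Fin l → ℕ) (k : Fin l →₀ ℕ) : Set (Config l) :=
  {c | (∀ i, rowSum c i = m i) ∧ ∀ i, degSum c i = k i}

lemma configSet_finite (m : Fin l → ℕ) (k : Fin l →₀ ℕ) : (configSet m k).Finite := by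
  classical
  let bound : Config l :=
    Finsupp.indicator (Finset.univ ×ˢ Finset.range (∑ i, k i + 1)) fun _ _ => ∑ i, m i
  refine (Set.finite_Iic bound).subset ?_
  rintro c ⟨hrow, hdeg⟩ ⟨i, t⟩
  by_cases h : c (i, t) = 0
  · simp [h]
  have hm : c (i, t) ≤ ∑ i, m i := (le_rowSum c i t).trans
    (hrow i ▸ Finset.single_le_sum (fun _ _ => Nat.zero_le _) (Finset.mem_univ i))
  have hk : t ≤ ∑ i, k i :=
    calc t ≤ t * c (i, t) := Nat.le_mul_of_pos_right t (Nat.pos_of_ne_zero h)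
      _ ≤ k i := hdeg i ▸ mul_le_degSum c i t
      _ ≤ ∑ i, k i := Finset.single_le_sum (fun _ _ => Nat.zero_le _) (Finset.mem_univ i)
  simpa [bound, Finsupp.indicator_apply, Nat.lt_succ_of_le hk] using hm

def configs (m : Fin l → ℕ) (k : Fin l →₀ ℕ) : Finset (Config l) :=
  (configSet_finite m k).toFinset

lemma mem_configs {m : Fin l → ℕ} {k : Fin l →₀ ℕ} {c : Config l} :
    c ∈ configs m k ↔ (∀ i, rowSum c i = m i) ∧ ∀ i, degSum c i = k i :=
  Set.Finite.mem_toFinset _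

lemma mem_configs_iff_shift {m : Fin l → ℕ} {k : Fin l →₀ ℕ} {c : Config l} :
    c ∈ configs m k ↔ (∀ i, c (i, 0) + rowSum (shift c) i = m i) ∧
      ∀ i, degSum (shift c) i + rowSum (shift c) i = k i := by
  simp only [mem_configs, ← rowSum_eq_add_rowSum_shift, ← degSum_eq_add_rowSum_shift]

lemma coeff_Jser (B : Matrix (Fin l) (Fin l) ℤ) (d : Fin l → ℕ) (m : Fin l → ℕ)
    (k : Fin l →₀ ℕ) :
    MvPowerSeries.coeff k (Jser B d m) = ∑ c ∈ configs m k, weight B d c :=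
  finsum_mem_eq_finite_toFinset_sum _ (configSet_finite m k)

lemma mem_configs_zero {k : Fin l →₀ ℕ} {c : Config l} :
    c ∈ configs 0 k ↔ c = 0 ∧ k = 0 := by
  refine ⟨fun hc => ?_, ?_⟩
  · obtain ⟨hrow, hdeg⟩ := mem_configs.mp hc
    have hc0 : c = 0 := by
      ext ⟨i, t⟩
      simpa [hrow i] using le_rowSum c i t
    subst hc0
    exact ⟨rfl, Finsupp.ext fun i => by simp [← hdeg i, degSum]⟩
  · rintro ⟨rfl, rfl⟩
    exact mem_configs.mpr ⟨fun i => by simp [rowSum], fun i => by simp [degSum]⟩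

lemma Jser_zero (B : Matrix (Fin l) (Fin l) ℤ) (d : Fin l → ℕ) : Jser B d 0 = 1 := by
  ext k
  rw [coeff_Jser, MvPowerSeries.coeff_one]
  split_ifs with hk
  · rw [Finset.sum_eq_single_of_mem 0 (mem_configs_zero.mpr ⟨rfl, hk⟩)
      fun c hc hne => absurd (mem_configs_zero.mp hc).1 hne]
    simp [weight, Eb]
  · exact Finset.sum_eq_zero fun c hc => absurd (mem_configs_zero.mp hc).2 hk

lemma mem_filter_configs_rowSum_shift {m a : Fin l → ℕ} {k : Fin l →₀ ℕ} {c : Config l} :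
    c ∈ (configs m k).filter (fun c => rowSum (shift c) = a) ↔
      (∀ i, c (i, 0) + a i = m i) ∧ (∀ i, degSum (shift c) i + a i = k i) ∧
        ∀ i, rowSum (shift c) i = a i := by
  rw [Finset.mem_filter, mem_configs_iff_shift, funext_iff]
  constructor
  · rintro ⟨⟨hrow, hdeg⟩, hsh⟩
    exact ⟨fun i => hsh i ▸ hrow i, fun i => hsh i ▸ hdeg i, hsh⟩
  · rintro ⟨hrow, hdeg, hsh⟩
    exact ⟨⟨fun i => (hsh i).symm ▸ hrow i, fun i => (hsh i).symm ▸ hdeg i⟩, hsh⟩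

lemma sum_weight_filter_rowSum_shift {B : Matrix (Fin l) (Fin l) ℤ} {d : Fin l → ℕ}
    (hsym : B.IsSymm) (hdiag : ∀ i, B i i = 2 * d i) {m a : Fin l → ℕ} (ha : a ≤ m)
    (k : Fin l →₀ ℕ) :
    ∑ c ∈ configs m k with rowSum (shift c) = a, weight B d c =
      if Finsupp.equivFunOnFinite.symm a ≤ k then
        q1 ^ Wb B d a * (∏ i, qpd (d i) (m i - a i))⁻¹ *
          MvPowerSeries.coeff (k - Finsupp.equivFunOnFinite.symm a) (Jser B d a)
      else 0 := by
  split_ifs with hak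
  · have hak' (i : Fin l) : a i ≤ k i := by simpa using hak i
    rw [coeff_Jser, Finset.mul_sum]
    refine Finset.sum_nbij' shift (unshift (m - a)) (fun c hc => ?_) (fun c hc => ?_)
      (fun c hc => ?_) (fun c _ => shift_unshift _ c) (fun c hc => ?_)
    · obtain ⟨-, hdeg, hsh⟩ := mem_filter_configs_rowSum_shift.mp hc
      exact mem_configs.mpr ⟨hsh, fun i => by simpa using Nat.eq_sub_of_add_eq (hdeg i)⟩
    · obtain ⟨hsh, hdeg⟩ := mem_configs.mp hc
      refine mem_filter_configs_rowSum_shift.mpr ⟨fun i => ?_, fun i => ?_, by simpa using hsh⟩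
      · simpa using Nat.sub_add_cancel (ha i)
      · have hdeg_i := hdeg i
        simp only [shift_unshift, Finsupp.tsub_apply, Finsupp.equivFunOnFinite_symm_apply_apply]
          at hdeg_i ⊢
        have := hak' i
        omega
    all_goals obtain ⟨hrow, -, hsh⟩ := mem_filter_configs_rowSum_shift.mp hc
    · conv_rhs => rw [← unshift_shift c]
      congr
      funext i
      simpa using (Nat.eq_sub_of_add_eq (hrow i)).symm
    · rw [weight_eq_mul_weight_shift hsym hdiag c, funext hsh]
      simp only [Nat.eq_sub_of_add_eq (hrow _)]
  · refine Finset.sum_eq_zero fun c hc => absurd (fun i => ?_) hak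
    obtain ⟨-, hdeg, -⟩ := mem_filter_configs_rowSum_shift.mp hc
    simpa using hdeg i ▸ Nat.le_add_left (a i) _

lemma Jser_eq_sum_monomial_mul {B : Matrix (Fin l) (Fin l) ℤ} {d : Fin l → ℕ}
    (hsym : B.IsSymm) (hdiag : ∀ i, B i i = 2 * d i) (m : Fin l → ℕ) :
    Jser B d m = ∑ a ∈ Finset.Iic m,
      MvPowerSeries.monomial (Finsupp.equivFunOnFinite.symm a)
        (q1 ^ Wb B d a * (∏ i, qpd (d i) (m i - a i))⁻¹) * Jser B d a := by
  ext k
  have hmaps (c : Config l) (hc : c ∈ configs m k) : rowSum (shift c) ∈ Finset.Iic m :=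
    Finset.mem_Iic.mpr fun i => (mem_configs_iff_shift.mp hc).1 i ▸ Nat.le_add_left _ _
  rw [coeff_Jser, ← Finset.sum_fiberwise_of_maps_to hmaps, map_sum]
  refine Finset.sum_congr rfl fun a ha => ?_
  rw [sum_weight_filter_rowSum_shift hsym hdiag (Finset.mem_Iic.mp ha),
    MvPowerSeries.coeff_monomial_mul]

end Fermionic

theorem stmt_1_general (l : ℕ) (B : Matrix (Fin l) (Fin l) ℤ)
    (d : Fin l → ℕ) (hsym : B.IsSymm)
    (hdiag : ∀ i, B i i = 2 * d i) :
    (∀ m : Fin l → ℕ, Jser B d m =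
      ∑ a ∈ Finset.Iic m,
        (MvPowerSeries.monomial (Finsupp.equivFunOnFinite.symm a)
          (q1 ^ Wb B d a * (∏ i, qpd (d i) (m i - a i))⁻¹)) * Jser B d a)
    ∧ (∀ Jtld : (Fin l → ℕ) → MvPowerSeries (Fin l) Kq, Jtld 0 = 1 →
        (∀ m : Fin l → ℕ, Jtld m =
          ∑ a ∈ Finset.Iic m,
            (MvPowerSeries.monomial (Finsupp.equivFunOnFinite.symm a)
              (q1 ^ Wb B d a * (∏ i, qpd (d i) (m i - a i))⁻¹)) * Jtld a) →
        Jtld = Jser B d) := by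
  have hrec := Fermionic.Jser_eq_sum_monomial_mul hsym hdiag
  exact ⟨hrec, fun J hJ0 hJ =>
    MvPowerSeries.eq_of_eq_sum_monomial_mul (hJ0.trans (Fermionic.Jser_zero B d).symm) hJ hrec⟩

theorem stmt_1 (l : ℕ) (hl : 1 ≤ l) (B : Matrix (Fin l) (Fin l) ℤ)
    (d : Fin l → ℕ) (hsym : B.IsSymm) (hdpos : ∀ i, 0 < d i)
    (hdiag : ∀ i, B i i = 2 * d i) (hoff : ∀ i j, i ≠ j → B i j ≤ 0)
    (hdvd : ∀ i j, (d i : ℤ) ∣ B i j)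
    (hposdef : ∀ x : Fin l → ℤ, x ≠ 0 → 0 < ∑ i, ∑ j, B i j * x i * x j) :
    (∀ m : Fin l → ℕ, Jser B d m =
      ∑ a ∈ Finset.Iic m,
        (MvPowerSeries.monomial (Finsupp.equivFunOnFinite.symm a)
          (q1 ^ Wb B d a * (∏ i, qpd (d i) (m i - a i))⁻¹)) * Jser B d a)
    ∧ (∀ Jtld : (Fin l → ℕ) → MvPowerSeries (Fin l) Kq, Jtld 0 = 1 →
        (∀ m : Fin l → ℕ, Jtld m =
          ∑ a ∈ Finset.Iic m,
            (MvPowerSeries.monomial (Finsupp.equivFunOnFinite.symm a)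
              (q1 ^ Wb B d a * (∏ i, qpd (d i) (m i - a i))⁻¹)) * Jtld a) →
        Jtld = Jser B d) :=
  stmt_1_general l B d hsym hdiag

end
end

section
/- For every integer m ≥ 0 the following identity holds in the field ℚ(q,z,w): ∑_{a=0}^m [m,a]_q · (wz)^a q^{a(a−1)} / ( (z^{−1} q^{2−2m})_{m−a} · (wz)_a ) = ∏_{i=1}^m (1 − w q^{i−m}) / ( (z^{−1} q^{2(1−m)})_m · (wz)_m ). Equivalently (with w = q^ν), the sl_2 fermionic sum on the whole line with one corner at 0 of angle ν satisfies X^{(0,ν)}_m(q,z) = [ν,m] / ( (z^{−1} q^{2(1−m)})_m (q^ν z)_m ), where [ν,m] = (q^{ν−m+1})_m / (q)_m. -/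
/- STATEMENT 5: identity in ℚ(q,z,w):
   ∑_{a=0}^m [m,a]_q (wz)^a q^{a(a−1)} / ((z⁻¹q^{2−2m})_{m−a} (wz)_a)
     = ∏_{i=1}^m (1 − w q^{i−m}) / ((z⁻¹ q^{2(1−m)})_m (wz)_m). -/

noncomputable section

open scoped BigOperators

/-- The field ℚ(q,z,w). -/
abbrev F5 : Type := FractionRing (MvPolynomial (Fin 3) ℚ)

def q5 : F5 := algebraMap (MvPolynomial (Fin 3) ℚ) F5 (MvPolynomial.X 0)
def z5 : F5 := algebraMap (MvPolynomial (Fin 3) ℚ) F5 (MvPolynomial.X 1)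
def w5 : F5 := algebraMap (MvPolynomial (Fin 3) ℚ) F5 (MvPolynomial.X 2)

/-- `(x)_n = ∏_{i=1}^n (1 - q^{i-1} x)` -/
def poch5 (x : F5) (n : ℕ) : F5 := ∏ i ∈ Finset.range n, (1 - q5 ^ i * x)

/-- `(q)_n = ∏_{k=1}^n (1 - q^k)` -/
def qp5 (n : ℕ) : F5 := ∏ k ∈ Finset.range n, (1 - q5 ^ (k + 1))

/-- q-binomial coefficient `[m,a]_q = (q)_m / ((q)_a (q)_{m-a})` -/
def qbinom5 (m a : ℕ) : F5 := qp5 m / (qp5 a * qp5 (m - a))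

/-!
Clearing denominators turns the identity into the polynomial q-Chu–Vandermonde identity
`∑ₐ [m,a]_q ∏_{t<a} qᵗ (qᵗ x - y) ∏_{a≤i<m} (1 - qⁱ x) = (y)_m`, valid in any commutative ring.
It follows by induction on `m` from the q-Pascal rule: the two halves of the rule reproduce the
identity for `m` at `x` and at `q x` respectively. For `x = wz` and `y = w q^{1-m}`, reversing the
order of the factors of `(z⁻¹ q^{2-2m})_m` beyond the first `m - a` turns them, together with
`(wz)ᵃ q^{a(a-1)}`, into `∏_{t<a} qᵗ (qᵗ x - y)`. At the generic point `(q, z, w)` of `ℚ(q,z,w)`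
none of the denominators vanishes.
-/

open Finset

section QAnalogues

variable {R : Type*} [CommRing R] (q : R)

def qFactorial (n : ℕ) : R := ∏ k ∈ range n, (1 - q ^ (k + 1))

def qPochhammer (x : R) (n : ℕ) : R := ∏ i ∈ range n, (1 - q ^ i * x)

def gaussBinom : ℕ → ℕ → R
  | _, 0 => 1
  | 0, _ + 1 => 0
  | m + 1, a + 1 => gaussBinom m (a + 1) + q ^ (m - a) * gaussBinom m a

@[simp]
lemma gaussBinom_zero_right (m : ℕ) : gaussBinom q m 0 = 1 := by
  cases m <;> rfl

lemma gaussBinom_succ_succ (m a : ℕ) :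
    gaussBinom q (m + 1) (a + 1) = gaussBinom q m (a + 1) + q ^ (m - a) * gaussBinom q m a :=
  rfl

lemma gaussBinom_eq_zero_of_lt {m a : ℕ} (h : m < a) : gaussBinom q m a = 0 := by
  induction m generalizing a with
  | zero => obtain ⟨a, rfl⟩ := Nat.exists_eq_succ_of_ne_zero (by omega : a ≠ 0); rfl
  | succ m ih =>
    obtain ⟨a, rfl⟩ := Nat.exists_eq_succ_of_ne_zero (by omega : a ≠ 0)
    rw [gaussBinom_succ_succ, ih (by omega), ih (by omega), mul_zero, add_zero]

lemma qFactorial_succ (n : ℕ) : qFactorial q (n + 1) = qFactorial q n * (1 - q ^ (n + 1)) :=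
  prod_range_succ _ n

lemma qFactorial_dvd {k m : ℕ} (h : k ≤ m) : qFactorial q k ∣ qFactorial q m :=
  prod_dvd_prod_of_subset _ _ _ (range_subset_range.2 h)

lemma qPochhammer_dvd (x : R) {k m : ℕ} (h : k ≤ m) : qPochhammer q x k ∣ qPochhammer q x m :=
  prod_dvd_prod_of_subset _ _ _ (range_subset_range.2 h)

lemma gaussBinom_mul_qFactorial {m a : ℕ} (h : a ≤ m) :
    gaussBinom q m a * (qFactorial q a * qFactorial q (m - a)) = qFactorial q m := by
  induction m generalizing a with
  | zero =>
    obtain rfl : a = 0 := by omega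
    simp [qFactorial]
  | succ m ih =>
    obtain _ | a := a
    · simp [qFactorial]
    -- also at `a = m`, where both sides vanish
    have h₁ : gaussBinom q m (a + 1) * (qFactorial q (a + 1) * qFactorial q (m - a))
        = qFactorial q m * (1 - q ^ (m - a)) := by
      rcases (by omega : a < m ∨ a = m) with ha | rfl
      · obtain ⟨k, hk⟩ : ∃ k, m - a = k + 1 := ⟨m - a - 1, by omega⟩
        rw [hk, qFactorial_succ q k, ← ih (by omega : a + 1 ≤ m), (by omega : m - (a + 1) = k)]
        ring
      · simp [gaussBinom_eq_zero_of_lt q (Nat.lt_succ_self a)]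
    have h₂ := ih (by omega : a ≤ m)
    have hpow : q ^ (m + 1) = q ^ (m - a) * q ^ (a + 1) := by rw [← pow_add]; congr 1; omega
    rw [gaussBinom_succ_succ, qFactorial_succ q m, hpow, (by omega : m + 1 - (a + 1) = m - a)]
    linear_combination h₁ + q ^ (m - a) * (1 - q ^ (a + 1)) * h₂
      + q ^ (m - a) * gaussBinom q m a * qFactorial q (m - a) * qFactorial_succ q a

lemma prod_pow_mul_sub_shift (x y : R) (b : ℕ) :
    (∏ t ∈ range b, q ^ t * (q ^ t * x - y)) * (q ^ b * x - y)
      = (x - y) * ∏ t ∈ range b, q ^ t * (q ^ t * (q * x) - y) := by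
  have hshift : ∀ t ∈ range b, q ^ t * (q * x) - y = q ^ (t + 1) * x - y := fun t _ => by ring
  rw [prod_mul_distrib, prod_mul_distrib, prod_congr rfl hshift, mul_assoc,
    ← prod_range_succ (fun t => q ^ t * x - y), prod_range_succ']
  simp only [pow_zero, one_mul]
  ring

lemma prod_Ico_one_sub_pow_mul_shift (x : R) (a m : ℕ) :
    ∏ i ∈ Ico (a + 1) (m + 1), (1 - q ^ i * x) = ∏ i ∈ Ico a m, (1 - q ^ i * (q * x)) := by
  rw [← prod_Ico_add' _ a m 1]
  exact prod_congr rfl fun i _ => by ring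

theorem sum_gaussBinom_mul_prod_eq_qPochhammer (x y : R) (m : ℕ) :
    ∑ a ∈ range (m + 1), gaussBinom q m a * (∏ t ∈ range a, q ^ t * (q ^ t * x - y)) *
      ∏ i ∈ Ico a m, (1 - q ^ i * x) = qPochhammer q y m := by
  induction m generalizing x with
  | zero => simp [qPochhammer]
  | succ m ih =>
    have hfirst : ∑ a ∈ range (m + 2), gaussBinom q m a *
        (∏ t ∈ range a, q ^ t * (q ^ t * x - y)) * ∏ i ∈ Ico a (m + 1), (1 - q ^ i * x)
        = qPochhammer q y m * (1 - q ^ m * x) := by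
      rw [sum_range_succ, gaussBinom_eq_zero_of_lt q (Nat.lt_succ_self _), zero_mul, zero_mul,
        add_zero, ← ih x, sum_mul]
      refine sum_congr rfl fun a ha => ?_
      rw [prod_Ico_succ_top (by rw [mem_range] at ha; omega)]
      ring
    have hsecond : ∀ b ∈ range (m + 1), q ^ (m - b) * gaussBinom q m b *
        (∏ t ∈ range (b + 1), q ^ t * (q ^ t * x - y)) *
          ∏ i ∈ Ico (b + 1) (m + 1), (1 - q ^ i * x)
        = q ^ m * (x - y) * (gaussBinom q m b * (∏ t ∈ range b, q ^ t * (q ^ t * (q * x) - y)) *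
          ∏ i ∈ Ico b m, (1 - q ^ i * (q * x))) := by
      intro b hb
      have hpow : q ^ m = q ^ (m - b) * q ^ b := by
        rw [← pow_add]; congr 1; rw [mem_range] at hb; omega
      rw [prod_range_succ, prod_Ico_one_sub_pow_mul_shift, hpow]
      linear_combination q ^ (m - b) * gaussBinom q m b * q ^ b *
        (∏ i ∈ Ico b m, (1 - q ^ i * (q * x))) * prod_pow_mul_sub_shift q x y b
    calc _ = ∑ a ∈ range (m + 2), gaussBinom q m a *
            (∏ t ∈ range a, q ^ t * (q ^ t * x - y)) * ∏ i ∈ Ico a (m + 1), (1 - q ^ i * x)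
          + ∑ b ∈ range (m + 1), q ^ (m - b) * gaussBinom q m b *
            (∏ t ∈ range (b + 1), q ^ t * (q ^ t * x - y)) *
              ∏ i ∈ Ico (b + 1) (m + 1), (1 - q ^ i * x) := by
          simp only [sum_range_succ' _ (m + 1), gaussBinom_succ_succ, add_mul, sum_add_distrib,
            gaussBinom_zero_right]
          ring
      _ = qPochhammer q y m * (1 - q ^ m * x) + q ^ m * (x - y) * qPochhammer q y m := by
          rw [hfirst, sum_congr rfl hsecond, ← mul_sum, ih]
      _ = qPochhammer q y (m + 1) := by
          rw [qPochhammer, qPochhammer, prod_range_succ]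
          ring

lemma pow_mul_pow_mul_prod_Ico_eq {a m : ℕ} (h : a ≤ m) (x A : R) :
    x ^ a * q ^ (a * (a - 1)) * ∏ i ∈ Ico (m - a) m, (1 - q ^ i * A)
      = ∏ t ∈ range a, q ^ t * (q ^ t * x - q ^ (m - 1) * A * x) := by
  have hreflect :
      ∏ i ∈ Ico (m - a) m, (1 - q ^ i * A) = ∏ t ∈ range a, (1 - q ^ (m - 1 - t) * A) := by
    rw [prod_Ico_eq_prod_range, (by omega : m - (m - a) = a), ← prod_range_reflect]
    refine prod_congr rfl fun t ht => ?_
    rw [mem_range] at ht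
    rw [(by omega : m - a + (a - 1 - t) = m - 1 - t)]
  have hsquare : q ^ (a * (a - 1)) = ∏ t ∈ range a, q ^ t * q ^ t := by
    rw [prod_mul_distrib, prod_pow_eq_pow_sum, ← pow_add, ← mul_two, sum_range_id_mul_two]
  have hconst : x ^ a = ∏ _t ∈ range a, x := by rw [prod_const, card_range]
  rw [hreflect, hsquare, hconst, ← prod_mul_distrib, ← prod_mul_distrib]
  refine prod_congr rfl fun t ht => ?_
  have hpow : q ^ (m - 1) = q ^ t * q ^ (m - 1 - t) := by
    rw [← pow_add]; congr 1; rw [mem_range] at ht; omega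
  rw [hpow]
  ring

end QAnalogues

section QAnaloguesField

variable {K : Type*} [Field K] (q : K)

lemma gaussBinom_eq_div {m a : ℕ} (h : a ≤ m) (hm : qFactorial q m ≠ 0) :
    gaussBinom q m a = qFactorial q m / (qFactorial q a * qFactorial q (m - a)) :=
  eq_div_of_mul_eq (mul_ne_zero (ne_zero_of_dvd_ne_zero hm (qFactorial_dvd q h))
    (ne_zero_of_dvd_ne_zero hm (qFactorial_dvd q (Nat.sub_le m a))))
    (gaussBinom_mul_qFactorial q h)

theorem sum_qBinom_mul_div_qPochhammer {x A : K} {m : ℕ} (hfact : qFactorial q m ≠ 0)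
    (hA : qPochhammer q A m ≠ 0) (hx : qPochhammer q x m ≠ 0) :
    ∑ a ∈ range (m + 1), qFactorial q m / (qFactorial q a * qFactorial q (m - a)) * x ^ a *
        q ^ (a * (a - 1)) / (qPochhammer q A (m - a) * qPochhammer q x a)
      = qPochhammer q (q ^ (m - 1) * A * x) m / (qPochhammer q A m * qPochhammer q x m) := by
  rw [← sum_gaussBinom_mul_prod_eq_qPochhammer, sum_div]
  refine sum_congr rfl fun a ha => ?_
  have ha : a ≤ m := Nat.lt_succ_iff.mp (mem_range.mp ha)
  have hsplitA :
      qPochhammer q A m = qPochhammer q A (m - a) * ∏ i ∈ Ico (m - a) m, (1 - q ^ i * A) :=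
    (prod_range_mul_prod_Ico _ (Nat.sub_le m a)).symm
  have hsplitx : qPochhammer q x m = qPochhammer q x a * ∏ i ∈ Ico a m, (1 - q ^ i * x) :=
    (prod_range_mul_prod_Ico _ ha).symm
  have hden : qPochhammer q A (m - a) * qPochhammer q x a ≠ 0 :=
    mul_ne_zero (ne_zero_of_dvd_ne_zero hA (qPochhammer_dvd q A (Nat.sub_le m a)))
      (ne_zero_of_dvd_ne_zero hx (qPochhammer_dvd q x ha))
  rw [← gaussBinom_eq_div q ha hfact, ← pow_mul_pow_mul_prod_Ico_eq q ha,
    div_eq_div_iff hden (mul_ne_zero hA hx), hsplitA, hsplitx]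
  ring

end QAnaloguesField

open MvPolynomial in
lemma algebraMap_ne_zero_of_eval_ne_zero {p : MvPolynomial (Fin 3) ℚ} (f : Fin 3 → ℚ)
    (h : eval f p ≠ 0) : algebraMap (MvPolynomial (Fin 3) ℚ) F5 p ≠ 0 :=
  (map_ne_zero_iff _ (IsFractionRing.injective _ _)).mpr fun hp => h (by rw [hp, map_zero])

lemma q5_ne_zero : q5 ≠ 0 :=
  algebraMap_ne_zero_of_eval_ne_zero (fun _ => 1) (by simp)

lemma z5_ne_zero : z5 ≠ 0 :=
  algebraMap_ne_zero_of_eval_ne_zero (fun _ => 1) (by simp)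

lemma qFactorial_q5_ne_zero (n : ℕ) : qFactorial q5 n ≠ 0 := by
  refine prod_ne_zero_iff.mpr fun k _ => ?_
  have h : (1 : F5) - q5 ^ (k + 1) =
      algebraMap (MvPolynomial (Fin 3) ℚ) F5 (1 - MvPolynomial.X 0 ^ (k + 1)) := by
    simp [q5]
  rw [h]
  refine algebraMap_ne_zero_of_eval_ne_zero (fun _ => 2) ?_
  simp only [map_sub, map_one, map_pow, MvPolynomial.eval_X]
  have : (1 : ℚ) < 2 ^ (k + 1) := one_lt_pow₀ (by norm_num) (by omega)
  linarith

lemma qPochhammer_q5_w5_mul_z5_ne_zero (n : ℕ) : qPochhammer q5 (w5 * z5) n ≠ 0 := by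
  refine prod_ne_zero_iff.mpr fun i _ => ?_
  have h : (1 : F5) - q5 ^ i * (w5 * z5) = algebraMap (MvPolynomial (Fin 3) ℚ) F5
      (1 - MvPolynomial.X 0 ^ i * (MvPolynomial.X 2 * MvPolynomial.X 1)) := by
    simp [q5, z5, w5]
  rw [h]
  refine algebraMap_ne_zero_of_eval_ne_zero (fun _ => 2) ?_
  simp only [map_sub, map_one, map_mul, map_pow, MvPolynomial.eval_X]
  have : (1 : ℚ) ≤ 2 ^ i := one_le_pow₀ (by norm_num)
  nlinarith

lemma z5_ne_q5_zpow (n : ℤ) : z5 ≠ q5 ^ n := by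
  intro h
  have hsplit : q5 ^ n * q5 ^ (-n).toNat = q5 ^ n.toNat := by
    rw [← zpow_natCast, ← zpow_natCast, ← zpow_add₀ q5_ne_zero]
    congr 1
    omega
  refine algebraMap_ne_zero_of_eval_ne_zero
    (p := MvPolynomial.X 1 * MvPolynomial.X 0 ^ (-n).toNat - MvPolynomial.X 0 ^ n.toNat)
    (fun j => if j = 0 then 1 else 2) (by norm_num) ?_
  simp only [map_sub, map_mul, map_pow]
  change z5 * q5 ^ (-n).toNat - q5 ^ n.toNat = 0
  rw [h, hsplit, sub_self]

lemma qPochhammer_q5_z5_inv_mul_ne_zero (e : ℤ) (n : ℕ) :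
    qPochhammer q5 (z5⁻¹ * q5 ^ e) n ≠ 0 := by
  refine prod_ne_zero_iff.mpr fun i _ h => z5_ne_q5_zpow (i + e) ?_
  rw [zpow_add₀ q5_ne_zero, zpow_natCast]
  linear_combination z5 * h + q5 ^ i * q5 ^ e * mul_inv_cancel₀ z5_ne_zero

theorem stmt_5 (m : ℕ) :
    ∑ a ∈ Finset.range (m + 1),
      qbinom5 m a * (w5 * z5) ^ a * q5 ^ (a * (a - 1)) /
        (poch5 (z5⁻¹ * q5 ^ (2 - 2 * (m : ℤ))) (m - a) * poch5 (w5 * z5) a)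
    = (∏ i ∈ Finset.range m, (1 - w5 * q5 ^ ((i : ℤ) + 1 - m))) /
        (poch5 (z5⁻¹ * q5 ^ (2 * (1 - (m : ℤ)))) m * poch5 (w5 * z5) m) := by
  have hnum : ∏ i ∈ range m, (1 - w5 * q5 ^ ((i : ℤ) + 1 - m))
      = qPochhammer q5 (q5 ^ (m - 1) * (z5⁻¹ * q5 ^ (2 - 2 * (m : ℤ))) * (w5 * z5)) m := by
    refine prod_congr rfl fun i hi => ?_
    have hm : 1 ≤ m := by rw [mem_range] at hi; omega
    rw [← zpow_natCast q5 i, ← zpow_natCast q5 (m - 1), Nat.cast_sub hm]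
    calc 1 - w5 * q5 ^ ((i : ℤ) + 1 - m)
        = 1 - w5 * (z5 * z5⁻¹) *
            (q5 ^ (i : ℤ) * q5 ^ ((m : ℤ) - 1) * q5 ^ (2 - 2 * (m : ℤ))) := by
          rw [mul_inv_cancel₀ z5_ne_zero, ← zpow_add₀ q5_ne_zero, ← zpow_add₀ q5_ne_zero]
          ring_nf
      _ = _ := by push_cast; ring
  rw [(by ring : (2 : ℤ) * (1 - m) = 2 - 2 * m), hnum]
  exact sum_qBinom_mul_div_qPochhammer q5 (qFactorial_q5_ne_zero m)
    (qPochhammer_q5_z5_inv_mul_ne_zero _ m) (qPochhammer_q5_w5_mul_z5_ne_zero m)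

end
end
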